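/- There exist constants C > 0 and m₀ ≥ 1, depending only on μ, such that for all integers m, n with m₀ < m ≤ n and X_m ≤ X_n ≤ 2X_m, and every real number k, one has |∫_{0}^{X_m^{2/3}} ⟨x⟩^μ e^{ikx} h_m(x) h_n(x) dx| ≤ C · m^{-(1/12 - μ/4)} · n^{-(1/12 - μ/4)}. -/

import Mathlib

open Real MeasureTheory intervalIntegral

/-- Physicists' Hermite polynomials, as functions on `ℝ`. -/
noncomputable def physHermite : ℕ → ℝ → ℝ
  | 0, _ => 1
  | 1, x => 2 * x
  | n + 2, x => 2 * x * physHermite (n + 1) x - 2 * ((n : ℝ) + 1) * physHermite n x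

/-- The `j`-th Hermite function (for `j ≥ 1`), the `L²`-normalized eigenfunction of
`-d²/dx² + x²` with eigenvalue `2j - 1`. -/
noncomputable def hermiteFun (j : ℕ) (x : ℝ) : ℝ :=
  ((2 : ℝ) ^ (j - 1) * (Nat.factorial (j - 1) : ℝ) * Real.sqrt Real.pi) ^ (-(1 : ℝ) / 2) *
    Real.exp (-x ^ 2 / 2) * physHermite (j - 1) x

/-- The turning point `X_j = √(2j - 1)`. -/
noncomputable def Xpt (j : ℕ) : ℝ := Real.sqrt (2 * (j : ℝ) - 1)

/-- The oscillatory integrand `⟨x⟩^μ e^{ikx} h_m(x) h_n(x)`. -/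
noncomputable def osc (μ k : ℝ) (m n : ℕ) (x : ℝ) : ℂ :=
  (Real.sqrt (1 + x ^ 2) ^ μ : ℝ) * Complex.exp (Complex.I * k * x) *
    (hermiteFun m x : ℂ) * (hermiteFun n x : ℂ)

/-!
On `[0, X_m^{2/3}]` both Hermite functions are far below their turning points, where
`|h_j| ≤ 2 j^{-1/4}`; the trivial estimate (length of the interval times the supremum of the
integrand) then gives `m^{1/12 + μ/3} n^{-1/4}`, which is at most `(mn)^{-(1/12 - μ/4)}` for
`m ≤ n` and `μ ≥ 0`. The pointwise bound comes from the energy `ψ'² + (λ - x²) ψ²` of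
`ψ = e^{-x²/2} H_d`, `λ = 2d + 1`: it is nonincreasing on `[0, ∞)` because
`ψ'' = (x² - λ) ψ`, and at the origin it is `O(√λ · 2^d d!)` by the recursion
`H_{d+2}(0) = -2(d+1) H_d(0)`.
-/

open Set

theorem physHermite_succ (n : ℕ) (x : ℝ) :
    physHermite (n + 1) x = 2 * x * physHermite n x - 2 * n * physHermite (n - 1) x := by
  cases n <;> simp [physHermite]

theorem hasDerivAt_physHermite :
    ∀ (n : ℕ) (x : ℝ), HasDerivAt (physHermite n) (2 * n * physHermite (n - 1) x) x
  | 0, x => by simpa [physHermite] using hasDerivAt_const x (1 : ℝ)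
  | 1, x => by simpa [physHermite] using (hasDerivAt_id x).const_mul (2 : ℝ)
  | n + 2, x => by
    have h := (((hasDerivAt_id x).const_mul 2).mul (hasDerivAt_physHermite (n + 1) x)).sub
      ((hasDerivAt_physHermite n x).const_mul (2 * ((n : ℝ) + 1)))
    refine (h.congr_deriv ?_).congr_of_eventuallyEq (.of_forall fun y => rfl)
    have := physHermite_succ n x
    push_cast at this ⊢
    simp only [id]
    linear_combination (-2 * (n : ℝ) - 2) * this

noncomputable def gaussHermite (d : ℕ) (x : ℝ) : ℝ := exp (-x ^ 2 / 2) * physHermite d x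

theorem gaussHermite_succ_succ (d : ℕ) (x : ℝ) :
    gaussHermite (d + 2) x = 2 * x * gaussHermite (d + 1) x - 2 * (d + 1) * gaussHermite d x := by
  simp only [gaussHermite, physHermite]; ring

theorem hasDerivAt_gaussHermite (d : ℕ) (x : ℝ) :
    HasDerivAt (gaussHermite d) (x * gaussHermite d x - gaussHermite (d + 1) x) x := by
  have hg : HasDerivAt (fun y : ℝ => exp (-y ^ 2 / 2)) (exp (-x ^ 2 / 2) * (-x)) x := by
    have h := ((hasDerivAt_pow 2 x).fun_neg.div_const 2).exp
    convert h using 1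
    push_cast; ring
  refine (hg.mul (hasDerivAt_physHermite d x)).congr_deriv ?_
  simp only [gaussHermite, physHermite_succ]
  ring

theorem hasDerivAt_deriv_gaussHermite (d : ℕ) (x : ℝ) :
    HasDerivAt (fun y => y * gaussHermite d y - gaussHermite (d + 1) y)
      ((x ^ 2 - (2 * d + 1)) * gaussHermite d x) x := by
  refine (((hasDerivAt_id x).mul (hasDerivAt_gaussHermite d x)).sub
    (hasDerivAt_gaussHermite (d + 1) x)).congr_deriv ?_
  simp only [id, gaussHermite_succ_succ]
  ring

section OscillatorEnergy

variable {f f' : ℝ → ℝ} {E : ℝ} (hf : ∀ x, HasDerivAt f (f' x) x)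
  (hf' : ∀ x, HasDerivAt f' ((x ^ 2 - E) * f x) x)
include hf hf'

theorem antitoneOn_oscillator_energy :
    AntitoneOn (fun x => f' x ^ 2 + (E - x ^ 2) * f x ^ 2) (Ici 0) := by
  have hE : ∀ x, HasDerivAt (fun x => f' x ^ 2 + (E - x ^ 2) * f x ^ 2) (-2 * x * f x ^ 2) x := by
    intro x
    refine (((hf' x).fun_pow 2).add
      (((hasDerivAt_pow 2 x).const_sub E).mul ((hf x).fun_pow 2))).congr_deriv ?_
    push_cast
    ring
  refine antitoneOn_of_deriv_nonpos (convex_Ici 0)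
    (fun x _ => (hE x).continuousAt.continuousWithinAt)
    (fun x _ => (hE x).differentiableAt.differentiableWithinAt) fun x hx => ?_
  rw [interior_Ici] at hx
  rw [(hE x).deriv]
  nlinarith [sq_nonneg (f x), mem_Ioi.1 hx]

theorem sq_mul_le_oscillator_energy_zero {x : ℝ} (hx : 0 ≤ x) :
    (E - x ^ 2) * f x ^ 2 ≤ f' 0 ^ 2 + E * f 0 ^ 2 := by
  have := antitoneOn_oscillator_energy hf hf' self_mem_Ici hx hx
  simp only [ne_eq, OfNat.ofNat_ne_zero, not_false_eq_true, zero_pow, sub_zero] at this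
  nlinarith [sq_nonneg (f' x)]

end OscillatorEnergy

theorem physHermite_succ_succ_zero (d : ℕ) :
    physHermite (d + 2) 0 = -2 * (d + 1) * physHermite d 0 := by
  simp [physHermite]

theorem physHermite_zero_mul_succ_zero : ∀ d : ℕ, physHermite d 0 * physHermite (d + 1) 0 = 0
  | 0 => by simp [physHermite]
  | d + 1 => by
    rw [physHermite_succ_succ_zero]
    linear_combination (-2 * ((d : ℝ) + 1)) * physHermite_zero_mul_succ_zero d

/- Since `H_{2r}(0)² = binom(2r, r) (2r)!`, this is the Wallis-type bound
`binom(2r, r) ≤ 4^r / √(3r + 1)` in a form that survives the two-step recursion. -/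
theorem physHermite_zero_pow_four_le :
    ∀ d : ℕ, physHermite d 0 ^ 4 * (3 * d + 2) ≤ 2 * ((2 : ℝ) ^ d * d.factorial) ^ 2
  | 0 => by norm_num [physHermite]
  | 1 => by norm_num [physHermite]
  | d + 2 => by
    have ih := physHermite_zero_pow_four_le d
    have hpoly : ((d : ℝ) + 1) ^ 2 * (3 * d + 8) ≤ ((d : ℝ) + 2) ^ 2 * (3 * d + 2) := by
      nlinarith [(d.cast_nonneg : (0 : ℝ) ≤ d)]
    rw [physHermite_succ_succ_zero, Nat.factorial_succ, Nat.factorial_succ]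
    push_cast
    calc (-2 * ((d : ℝ) + 1) * physHermite d 0) ^ 4 * (3 * ((d : ℝ) + 2) + 2)
        = 16 * ((d : ℝ) + 1) ^ 2 * (((d : ℝ) + 1) ^ 2 * (3 * d + 8)) * physHermite d 0 ^ 4 := by
          ring
      _ ≤ 16 * ((d : ℝ) + 1) ^ 2 * (((d : ℝ) + 2) ^ 2 * (3 * d + 2)) *
          physHermite d 0 ^ 4 := by gcongr
      _ = 16 * ((d : ℝ) + 1) ^ 2 * ((d : ℝ) + 2) ^ 2 * (physHermite d 0 ^ 4 * (3 * d + 2)) := by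
          ring
      _ ≤ 16 * ((d : ℝ) + 1) ^ 2 * ((d : ℝ) + 2) ^ 2 *
          (2 * ((2 : ℝ) ^ d * d.factorial) ^ 2) := by gcongr
      _ = _ := by ring

theorem physHermite_oscillator_energy_zero_sq_le (d : ℕ) :
    (physHermite (d + 1) 0 ^ 2 + (2 * d + 1) * physHermite d 0 ^ 2) ^ 2
      ≤ 4 * (2 * d + 1) * ((2 : ℝ) ^ d * d.factorial) ^ 2 := by
  rcases mul_eq_zero.mp (physHermite_zero_mul_succ_zero d) with h | h
  · have := physHermite_zero_pow_four_le (d + 1)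
    rw [Nat.factorial_succ] at this
    push_cast at this
    rw [h]
    refine le_of_mul_le_mul_right ?_ (by positivity : (0 : ℝ) < 3 * d + 5)
    calc (physHermite (d + 1) 0 ^ 2 + (2 * d + 1) * 0 ^ 2) ^ 2 * (3 * d + 5)
        = physHermite (d + 1) 0 ^ 4 * (3 * ((d : ℝ) + 1) + 2) := by ring
      _ ≤ 2 * (2 ^ (d + 1) * (((d : ℝ) + 1) * d.factorial)) ^ 2 := this
      _ = 8 * ((d : ℝ) + 1) ^ 2 * ((2 : ℝ) ^ d * d.factorial) ^ 2 := by ring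
      _ ≤ 4 * (2 * d + 1) * (3 * d + 5) * ((2 : ℝ) ^ d * d.factorial) ^ 2 :=
          mul_le_mul_of_nonneg_right (by nlinarith) (by positivity)
      _ = _ := by ring
  · have := physHermite_zero_pow_four_le d
    rw [h]
    refine le_of_mul_le_mul_right ?_ (by positivity : (0 : ℝ) < 3 * d + 2)
    calc (0 ^ 2 + (2 * d + 1) * physHermite d 0 ^ 2) ^ 2 * (3 * d + 2)
        = (2 * (d : ℝ) + 1) ^ 2 * (physHermite d 0 ^ 4 * (3 * d + 2)) := by ring
      _ ≤ (2 * (d : ℝ) + 1) ^ 2 * (2 * ((2 : ℝ) ^ d * d.factorial) ^ 2) := by gcongr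
      _ = 2 * (2 * (d : ℝ) + 1) ^ 2 * ((2 : ℝ) ^ d * d.factorial) ^ 2 := by ring
      _ ≤ 4 * (2 * d + 1) * (3 * d + 2) * ((2 : ℝ) ^ d * d.factorial) ^ 2 :=
          mul_le_mul_of_nonneg_right (by nlinarith) (by positivity)
      _ = _ := by ring

theorem hermiteFun_succ (d : ℕ) (x : ℝ) :
    hermiteFun (d + 1) x =
      ((2 : ℝ) ^ d * d.factorial * sqrt π) ^ (-(1 : ℝ) / 2) * gaussHermite d x := by
  simp only [hermiteFun, gaussHermite, Nat.add_sub_cancel]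
  ring

theorem Xpt_nonneg (j : ℕ) : 0 ≤ Xpt j := sqrt_nonneg _

theorem Xpt_succ_sq (d : ℕ) : Xpt (d + 1) ^ 2 = 2 * d + 1 := by
  have h : 2 * ((d + 1 : ℕ) : ℝ) - 1 = 2 * d + 1 := by push_cast; ring
  rw [Xpt, h, sq_sqrt (by positivity)]

theorem sq_sub_sq_mul_hermiteFun_sq_le {j : ℕ} (hj : 1 ≤ j) {x : ℝ} (hx : 0 ≤ x) :
    (Xpt j ^ 2 - x ^ 2) * hermiteFun j x ^ 2 ≤ 2 * Xpt j := by
  obtain ⟨d, rfl⟩ : ∃ d, j = d + 1 := ⟨j - 1, by omega⟩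
  set N : ℝ := 2 ^ d * d.factorial
  set B : ℝ := N * sqrt π
  have hN : 0 < N := by positivity
  have hNB : N ≤ B := le_mul_of_one_le_right hN.le (one_le_sqrt.2 (by linarith [pi_gt_three]))
  have hB : 0 < B := hN.trans_le hNB
  have hnorm : (B ^ (-(1 : ℝ) / 2)) ^ 2 = B⁻¹ := by
    rw [← rpow_natCast, ← rpow_mul hB.le]
    norm_num [rpow_neg_one]
  set e : ℝ := physHermite (d + 1) 0 ^ 2 + (2 * d + 1) * physHermite d 0 ^ 2
  have henergy : (Xpt (d + 1) ^ 2 - x ^ 2) * gaussHermite d x ^ 2 ≤ e := by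
    have := sq_mul_le_oscillator_energy_zero (hasDerivAt_gaussHermite d)
      (hasDerivAt_deriv_gaussHermite d) hx
    simpa [Xpt_succ_sq, gaussHermite, e] using this
  have he : e ≤ 2 * Xpt (d + 1) * N := by
    refine (sq_le_sq₀ (add_nonneg (sq_nonneg _) (by positivity))
      (mul_nonneg (mul_nonneg zero_le_two (Xpt_nonneg _)) hN.le)).1 ?_
    rw [mul_pow, mul_pow, Xpt_succ_sq]
    linarith [physHermite_oscillator_energy_zero_sq_le d]
  rw [hermiteFun_succ, mul_pow, hnorm, mul_left_comm]
  calc B⁻¹ * ((Xpt (d + 1) ^ 2 - x ^ 2) * gaussHermite d x ^ 2) ≤ B⁻¹ * e := by gcongr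
    _ ≤ e / N := by rw [inv_mul_eq_div]; gcongr
    _ ≤ 2 * Xpt (d + 1) := by rwa [div_le_iff₀ hN]

theorem two_le_Xpt_rpow {j : ℕ} (hj : 5 ≤ j) : 2 ≤ Xpt j ^ ((2 : ℝ) / 3) := by
  have hj' : (5 : ℝ) ≤ j := by exact_mod_cast hj
  refine le_of_pow_le_pow_left₀ three_ne_zero (rpow_nonneg (Xpt_nonneg j) _) ?_
  rw [← rpow_natCast (Xpt j ^ _), ← rpow_mul (Xpt_nonneg j), Xpt]
  norm_num
  rw [sq_sqrt (by linarith)]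
  linarith

theorem abs_hermiteFun_le {j : ℕ} (hj : 5 ≤ j) {x : ℝ} (hx0 : 0 ≤ x)
    (hx : x ≤ Xpt j ^ ((2 : ℝ) / 3)) :
    |hermiteFun j x| ≤ 2 * (j : ℝ) ^ (-(1 : ℝ) / 4) := by
  have hj' : (5 : ℝ) ≤ j := by exact_mod_cast hj
  have hX2 : Xpt j ^ 2 = 2 * j - 1 := sq_sqrt (by linarith)
  have hX : sqrt j ≤ Xpt j := by
    rw [← sqrt_sq (Xpt_nonneg j), hX2]
    exact sqrt_le_sqrt (by linarith)
  have hXpos : 0 < sqrt j := sqrt_pos.2 (by linarith)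
  have hxX : x ^ 2 ≤ Xpt j ^ 2 / 2 := by
    have hsplit : Xpt j ^ 2 =
        Xpt j ^ ((2 : ℝ) / 3) * Xpt j ^ ((2 : ℝ) / 3) * Xpt j ^ ((2 : ℝ) / 3) := by
      rw [← rpow_add' (Xpt_nonneg j) (by norm_num), ← rpow_add' (Xpt_nonneg j) (by norm_num)]
      norm_num
    have := two_le_Xpt_rpow hj
    rw [hsplit]
    nlinarith
  have hsq : hermiteFun j x ^ 2 ≤ 4 / sqrt j := by
    have := sq_sub_sq_mul_hermiteFun_sq_le (by omega : 1 ≤ j) hx0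
    rw [le_div_iff₀ hXpos]
    nlinarith [sq_nonneg (hermiteFun j x)]
  have hrpow : (2 * (j : ℝ) ^ (-(1 : ℝ) / 4)) ^ 2 = 4 / sqrt j := by
    rw [mul_pow, ← rpow_natCast ((j : ℝ) ^ _), ← rpow_mul (by positivity), sqrt_eq_rpow,
      div_eq_mul_inv (4 : ℝ), ← rpow_neg (by positivity)]
    norm_num
  rw [← sq_abs, ← hrpow] at hsq
  exact (sq_le_sq₀ (abs_nonneg _) (by positivity)).1 hsq

theorem Xpt_rpow_le (j : ℕ) {p : ℝ} (hp : 0 ≤ p) : Xpt j ^ p ≤ (2 * j) ^ (p / 2) := by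
  calc Xpt j ^ p ≤ sqrt (2 * j) ^ p := rpow_le_rpow (Xpt_nonneg j) (sqrt_le_sqrt (by linarith)) hp
    _ = (2 * j) ^ (p / 2) := by rw [sqrt_eq_rpow, ← rpow_mul (by positivity), one_div_mul_eq_div]

theorem rpow_mul_rpow_le_rpow_mul_rpow {m n a b c d : ℝ} (hm : 0 < m) (hmn : m ≤ n)
    (hn : 1 ≤ n) (hca : c ≤ a) (h : a + b ≤ c + d) : m ^ a * n ^ b ≤ m ^ c * n ^ d := by
  have hn0 : 0 < n := hm.trans_le hmn
  calc m ^ a * n ^ b = m ^ c * (m ^ (a - c) * n ^ b) := by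
        rw [← mul_assoc, ← rpow_add hm, add_sub_cancel]
    _ ≤ m ^ c * (n ^ (a - c) * n ^ b) := by gcongr
    _ ≤ m ^ c * n ^ d := by
        rw [← rpow_add hn0]
        gcongr
        linarith

theorem norm_osc (μ k : ℝ) (m n : ℕ) (x : ℝ) :
    ‖osc μ k m n x‖ = sqrt (1 + x ^ 2) ^ μ * |hermiteFun m x| * |hermiteFun n x| := by
  have he : ‖Complex.exp (Complex.I * k * x)‖ = 1 := by
    rw [mul_assoc, ← Complex.ofReal_mul]
    exact Complex.norm_exp_I_mul_ofReal _
  rw [osc, norm_mul, norm_mul, norm_mul, he, Complex.norm_real, Complex.norm_real,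
    Complex.norm_real, Real.norm_eq_abs, Real.norm_eq_abs, Real.norm_eq_abs,
    abs_of_nonneg (rpow_nonneg (sqrt_nonneg _) μ), mul_one]

theorem norm_osc_le {μ : ℝ} (hμ : 0 ≤ μ) (k : ℝ) {m n : ℕ} (hm : 5 ≤ m) (hmn : m ≤ n)
    (hX : Xpt m ≤ Xpt n) {x : ℝ} (hx0 : 0 ≤ x) (hx : x ≤ Xpt m ^ ((2 : ℝ) / 3)) :
    ‖osc μ k m n x‖ ≤ (2 * Xpt m ^ ((2 : ℝ) / 3)) ^ μ *
      (2 * (m : ℝ) ^ (-(1 : ℝ) / 4)) * (2 * (n : ℝ) ^ (-(1 : ℝ) / 4)) := by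
  have hT := two_le_Xpt_rpow hm
  have hweight : sqrt (1 + x ^ 2) ≤ 2 * Xpt m ^ ((2 : ℝ) / 3) := by
    rw [sqrt_le_left (by linarith)]
    nlinarith
  have hxn : x ≤ Xpt n ^ ((2 : ℝ) / 3) :=
    hx.trans (rpow_le_rpow (Xpt_nonneg m) hX (by norm_num))
  rw [norm_osc]
  gcongr
  · exact abs_hermiteFun_le hm hx0 hx
  · exact abs_hermiteFun_le (hm.trans hmn) hx0 hxn

theorem hermite_oscillatory_zero_Xm23_general (μ : ℝ) (hμ0 : 0 ≤ μ) :
    ∃ C : ℝ, 0 < C ∧ ∃ m₀ : ℕ, 1 ≤ m₀ ∧ ∀ m n : ℕ, m₀ < m → m ≤ n →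
      Xpt m ≤ Xpt n → Xpt n ≤ 2 * Xpt m → ∀ k : ℝ,
      ‖∫ x in (0 : ℝ)..((Xpt m) ^ ((2 : ℝ) / 3)), osc μ k m n x‖ ≤
        C * (m : ℝ) ^ (-(1 / 12 - μ / 4)) * (n : ℝ) ^ (-(1 / 12 - μ / 4)) := by
  refine ⟨4 * 2 ^ μ * 2 ^ ((1 + μ) / 3), by positivity, 4, by norm_num,
    fun m n hm hmn hX _ k => ?_⟩
  set T := Xpt m ^ ((2 : ℝ) / 3)
  have hT : 0 ≤ T := rpow_nonneg (Xpt_nonneg m) _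
  have hm1 : (1 : ℝ) ≤ m := by exact_mod_cast (by omega : 1 ≤ m)
  have hmn' : (m : ℝ) ≤ n := by exact_mod_cast hmn
  have hTμ : T ^ (1 + μ) ≤ 2 ^ ((1 + μ) / 3) * (m : ℝ) ^ ((1 + μ) / 3) := by
    rw [← rpow_mul (Xpt_nonneg m), ← mul_rpow zero_le_two (by positivity)]
    convert Xpt_rpow_le m (by positivity : 0 ≤ 2 / 3 * (1 + μ)) using 2
    ring
  have hbound := intervalIntegral.norm_integral_le_of_norm_le_const fun x hx =>
    norm_osc_le hμ0 k (by omega) hmn hX (uIoc_of_le hT ▸ hx).1.le (uIoc_of_le hT ▸ hx).2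
  calc _ ≤ _ := hbound
    _ = 4 * 2 ^ μ * T ^ (1 + μ) *
        ((m : ℝ) ^ (-(1 : ℝ) / 4) * (n : ℝ) ^ (-(1 : ℝ) / 4)) := by
        rw [sub_zero, abs_of_nonneg hT, mul_rpow zero_le_two hT, rpow_add' hT (by positivity),
          rpow_one]
        ring
    _ ≤ 4 * 2 ^ μ * (2 ^ ((1 + μ) / 3) * (m : ℝ) ^ ((1 + μ) / 3)) *
        ((m : ℝ) ^ (-(1 : ℝ) / 4) * (n : ℝ) ^ (-(1 : ℝ) / 4)) := by gcongr
    _ = 4 * 2 ^ μ * 2 ^ ((1 + μ) / 3) *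
        ((m : ℝ) ^ ((1 + μ) / 3 + -(1 : ℝ) / 4) * (n : ℝ) ^ (-(1 : ℝ) / 4)) := by
        rw [rpow_add (by positivity)]
        ring
    _ ≤ 4 * 2 ^ μ * 2 ^ ((1 + μ) / 3) *
        ((m : ℝ) ^ (-(1 / 12 - μ / 4)) * (n : ℝ) ^ (-(1 / 12 - μ / 4))) :=
        mul_le_mul_of_nonneg_left (rpow_mul_rpow_le_rpow_mul_rpow (by positivity) hmn'
          (hm1.trans hmn') (by linarith) (by linarith)) (by positivity)
    _ = _ := by ring

/-- estimate on `[0, X_m^{2/3}]` when `X_m ≤ X_n ≤ 2X_m`. -/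
theorem hermite_oscillatory_zero_Xm23 (μ : ℝ) (hμ0 : 0 ≤ μ) (hμ1 : μ < 1 / 3) :
    ∃ C : ℝ, 0 < C ∧ ∃ m₀ : ℕ, 1 ≤ m₀ ∧ ∀ m n : ℕ, m₀ < m → m ≤ n →
      Xpt m ≤ Xpt n → Xpt n ≤ 2 * Xpt m → ∀ k : ℝ,
      ‖∫ x in (0 : ℝ)..((Xpt m) ^ ((2 : ℝ) / 3)), osc μ k m n x‖ ≤
        C * (m : ℝ) ^ (-(1 / 12 - μ / 4)) * (n : ℝ) ^ (-(1 / 12 - μ / 4)) :=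
  hermite_oscillatory_zero_Xm23_general μ hμ0
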